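/- Let a : Fin n → ℝ, let f ∈ Rₙ be nonzero, and let k ≥ 1 be a natural number. Then a is a corner root of f if and only if a is a corner root of f ^ k. -/

import Mathlib

open MvPolynomial

abbrev 𝕋 : Type := Tropical (WithTop ℝ)

/-- The 𝕋-point determined by a real point. -/
noncomputable def tpt {n : ℕ} (a : Fin n → ℝ) : Fin n → 𝕋 :=
  fun i => Tropical.trop (a i : WithTop ℝ)

/-- The value at `a` of the `d`-monomial of `f`. -/
noncomputable def mval {n : ℕ} (f : MvPolynomial (Fin n) 𝕋) (d : Fin n →₀ ℕ)
    (a : Fin n → ℝ) : 𝕋 :=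
  f.coeff d * ∏ i, (tpt a i) ^ d i

/-- `a` is a corner root of `f` if at least two monomials of `f` attain the value of `f`
at `a`. -/
def IsCornerRoot {n : ℕ} (a : Fin n → ℝ) (f : MvPolynomial (Fin n) 𝕋) : Prop :=
  ∃ d₁ ∈ f.support, ∃ d₂ ∈ f.support, d₁ ≠ d₂ ∧
    mval f d₁ a = MvPolynomial.eval (tpt a) f ∧ mval f d₂ a = MvPolynomial.eval (tpt a) f

open Tropical Finset

section Helpers

lemma tsum_le {ι : Type*} (s : Finset ι) (g : ι → 𝕋) {i : ι} (hi : i ∈ s) :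
    (∑ j ∈ s, g j) ≤ g i := by
  rw [← untrop_le_iff, Finset.untrop_sum']
  exact Finset.inf_le hi

lemma tle_sum {ι : Type*} (s : Finset ι) (g : ι → 𝕋) {c : 𝕋}
    (h : ∀ i ∈ s, c ≤ g i) : c ≤ ∑ j ∈ s, g j := by
  rw [← untrop_le_iff, Finset.untrop_sum']
  exact Finset.le_inf fun i hi => untrop_le_iff.2 (h i hi)

lemma tsum_attained {ι : Type*} {s : Finset ι} {g : ι → 𝕋} (h : (∑ j ∈ s, g j) ≠ 0) :
    ∃ i ∈ s, g i = ∑ j ∈ s, g j := by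
  have hs : s.Nonempty := by
    rcases s.eq_empty_or_nonempty with rfl | hs
    · simp at h
    · exact hs
  obtain ⟨i, hi, hieq⟩ := Finset.exists_mem_eq_inf s hs (fun j => untrop (g j))
  refine ⟨i, hi, untrop_injective ?_⟩
  rw [Finset.untrop_sum']
  exact hieq.symm

lemma tle_zero (x : 𝕋) : x ≤ 0 := by
  rw [← untrop_le_iff, untrop_zero]
  exact le_top

lemma wt_cancel {u v u₀ v₀ : WithTop ℝ} (hu : u₀ ≤ u) (hv : v₀ ≤ v)
    (heq : u + v = u₀ + v₀) (h0 : u₀ + v₀ ≠ ⊤) : u = u₀ ∧ v = v₀ := by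
  lift u₀ to ℝ using fun h => h0 (by simp [h])
  lift v₀ to ℝ using fun h => h0 (by simp [h])
  have hune : u ≠ ⊤ := by
    intro h
    rw [h, top_add, ← WithTop.coe_add] at heq
    exact WithTop.coe_ne_top heq.symm
  have hvne : v ≠ ⊤ := by
    intro h
    rw [h, add_top, ← WithTop.coe_add] at heq
    exact WithTop.coe_ne_top heq.symm
  lift u to ℝ using hune
  lift v to ℝ using hvne
  rw [← WithTop.coe_add, ← WithTop.coe_add, WithTop.coe_inj] at heq
  rw [WithTop.coe_le_coe] at hu hv
  constructor
  · exact_mod_cast (by linarith : u = u₀)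
  · exact_mod_cast (by linarith : v = v₀)

lemma tmul_cancel {x y x₀ y₀ : 𝕋} (hx : x₀ ≤ x) (hy : y₀ ≤ y)
    (heq : x * y = x₀ * y₀) (h0 : x₀ * y₀ ≠ 0) : x = x₀ ∧ y = y₀ := by
  have heq' : untrop x + untrop y = untrop x₀ + untrop y₀ := by
    rw [← untrop_mul, ← untrop_mul, heq]
  have h0' : untrop x₀ + untrop y₀ ≠ ⊤ := by
    intro h
    exact h0 (untrop_injective (by rw [untrop_mul, h, untrop_zero]))
  obtain ⟨h1, h2⟩ := wt_cancel (untrop_le_iff.2 hx) (untrop_le_iff.2 hy) heq' h0'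
  exact ⟨untrop_injective h1, untrop_injective h2⟩

end Helpers

section MvalLemmas

variable {n : ℕ} (a : Fin n → ℝ)

/-- The "monomial part" of `mval`. -/
noncomputable def mpi (d : Fin n →₀ ℕ) : 𝕋 := ∏ i, (tpt a i) ^ d i

lemma tpt_ne_zero (i : Fin n) : tpt a i ≠ 0 := by
  intro h
  have := congrArg untrop h
  rw [tpt, untrop_trop, untrop_zero] at this
  exact WithTop.coe_ne_top this

lemma mpi_ne_zero (d : Fin n →₀ ℕ) : mpi a d ≠ 0 :=
  Finset.prod_ne_zero_iff.2 fun i _ => pow_ne_zero _ (tpt_ne_zero a i)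

lemma mpi_add (d e : Fin n →₀ ℕ) : mpi a (d + e) = mpi a d * mpi a e := by
  rw [mpi, mpi, mpi, ← Finset.prod_mul_distrib]
  exact Finset.prod_congr rfl fun i _ => by
    rw [Finsupp.add_apply, pow_add]

lemma mval_def (f : MvPolynomial (Fin n) 𝕋) (d : Fin n →₀ ℕ) :
    mval f d a = f.coeff d * mpi a d := rfl

lemma mval_eq_zero_iff (f : MvPolynomial (Fin n) 𝕋) (d : Fin n →₀ ℕ) :
    mval f d a = 0 ↔ f.coeff d = 0 := by
  rw [mval_def, mul_eq_zero]
  simp [mpi_ne_zero a d]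

lemma eval_as_sum (f : MvPolynomial (Fin n) 𝕋) :
    MvPolynomial.eval (tpt a) f = ∑ d ∈ f.support, mval f d a :=
  eval_eq' (tpt a) f

lemma eval_le_mval (f : MvPolynomial (Fin n) 𝕋) (d : Fin n →₀ ℕ) :
    MvPolynomial.eval (tpt a) f ≤ mval f d a := by
  by_cases hd : d ∈ f.support
  · rw [eval_as_sum]
    exact tsum_le _ _ hd
  · rw [notMem_support_iff] at hd
    have : mval f d a = 0 := (mval_eq_zero_iff a f d).2 hd
    rw [this]
    exact tle_zero _

lemma eval_ne_zero {f : MvPolynomial (Fin n) 𝕋} (hf : f ≠ 0) :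
    MvPolynomial.eval (tpt a) f ≠ 0 := by
  intro h
  obtain ⟨d, hd⟩ := (MvPolynomial.support_nonempty (p := f)).2 hf
  have h1 : mval f d a ≤ 0 := tle_zero _
  have h2 : (0 : 𝕋) ≤ mval f d a := h ▸ eval_le_mval a f d
  have := (mval_eq_zero_iff a f d).1 (le_antisymm h1 h2)
  exact (mem_support_iff.1 hd) this

lemma exists_achieve {f : MvPolynomial (Fin n) 𝕋} (hf : f ≠ 0) :
    ∃ d ∈ f.support, mval f d a = MvPolynomial.eval (tpt a) f := by
  have h := eval_ne_zero a hf
  rw [eval_as_sum] at h ⊢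
  exact tsum_attained h

lemma mval_mul (f g : MvPolynomial (Fin n) 𝕋) (e : Fin n →₀ ℕ) :
    mval (f * g) e a = ∑ x ∈ Finset.HasAntidiagonal.antidiagonal e, mval f x.1 a * mval g x.2 a := by
  rw [mval_def, MvPolynomial.coeff_mul, Finset.sum_mul]
  exact Finset.sum_congr rfl fun x hx => by
    rw [Finset.HasAntidiagonal.mem_antidiagonal] at hx
    rw [mval_def, mval_def, ← hx, mpi_add]
    ring

lemma eval_mul_le_mval (f g : MvPolynomial (Fin n) 𝕋) (e : Fin n →₀ ℕ) :
    MvPolynomial.eval (tpt a) f * MvPolynomial.eval (tpt a) g ≤ mval (f * g) e a := by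
  rw [mval_mul]
  exact tle_sum _ _ fun x _ => mul_le_mul' (eval_le_mval a f x.1) (eval_le_mval a g x.2)

lemma mval_mul_le (f g : MvPolynomial (Fin n) 𝕋) (d e : Fin n →₀ ℕ) :
    mval (f * g) (d + e) a ≤ mval f d a * mval g e a := by
  rw [mval_mul]
  have hde : (d, e) ∈ Finset.HasAntidiagonal.antidiagonal (d + e) := Finset.HasAntidiagonal.mem_antidiagonal.2 rfl
  exact tsum_le _ _ hde

lemma achieve_mul {f g : MvPolynomial (Fin n) 𝕋} (hf : f ≠ 0) (hg : g ≠ 0)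
    {d e : Fin n →₀ ℕ}
    (hd : mval f d a = MvPolynomial.eval (tpt a) f)
    (he : mval g e a = MvPolynomial.eval (tpt a) g) :
    (d + e) ∈ (f * g).support ∧
      mval (f * g) (d + e) a = MvPolynomial.eval (tpt a) (f * g) := by
  have hne : MvPolynomial.eval (tpt a) f * MvPolynomial.eval (tpt a) g ≠ 0 :=
    mul_ne_zero (eval_ne_zero a hf) (eval_ne_zero a hg)
  have hub : mval (f * g) (d + e) a ≤
      MvPolynomial.eval (tpt a) f * MvPolynomial.eval (tpt a) g := by
    calc mval (f * g) (d + e) a ≤ mval f d a * mval g e a := mval_mul_le a f g d e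
    _ = _ := by rw [hd, he]
  have heq : mval (f * g) (d + e) a =
      MvPolynomial.eval (tpt a) f * MvPolynomial.eval (tpt a) g :=
    le_antisymm hub (eval_mul_le_mval a f g (d + e))
  constructor
  · rw [mem_support_iff]
    intro hc
    have : mval (f * g) (d + e) a = 0 := (mval_eq_zero_iff a _ _).2 hc
    exact hne (this ▸ heq.symm)
  · rw [heq, map_mul]

lemma decompose_achieve {f g : MvPolynomial (Fin n) 𝕋} (hf : f ≠ 0) (hg : g ≠ 0)
    {e : Fin n →₀ ℕ}
    (he : mval (f * g) e a = MvPolynomial.eval (tpt a) (f * g)) :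
    ∃ d₁ d₂ : Fin n →₀ ℕ, d₁ + d₂ = e ∧ d₁ ∈ f.support ∧ d₂ ∈ g.support ∧
      mval f d₁ a = MvPolynomial.eval (tpt a) f ∧
      mval g d₂ a = MvPolynomial.eval (tpt a) g := by
  have hne : MvPolynomial.eval (tpt a) f * MvPolynomial.eval (tpt a) g ≠ 0 :=
    mul_ne_zero (eval_ne_zero a hf) (eval_ne_zero a hg)
  rw [map_mul] at he
  have hsum : (∑ x ∈ Finset.HasAntidiagonal.antidiagonal e, mval f x.1 a * mval g x.2 a) ≠ 0 := by
    rw [← mval_mul, he]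
    exact hne
  obtain ⟨x, hx, hxval⟩ := tsum_attained hsum
  rw [← mval_mul, he] at hxval
  obtain ⟨h1, h2⟩ := tmul_cancel (eval_le_mval a f x.1) (eval_le_mval a g x.2) hxval hne
  refine ⟨x.1, x.2, Finset.HasAntidiagonal.mem_antidiagonal.1 hx, ?_, ?_, h1, h2⟩
  · rw [mem_support_iff]
    intro hc
    exact eval_ne_zero a hf (((mval_eq_zero_iff a f x.1).2 hc ▸ h1).symm)
  · rw [mem_support_iff]
    intro hc
    exact eval_ne_zero a hg (((mval_eq_zero_iff a g x.2).2 hc ▸ h2).symm)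

lemma corner_mul {f g : MvPolynomial (Fin n) 𝕋} (hf : f ≠ 0) (hg : g ≠ 0) :
    IsCornerRoot a (f * g) ↔ IsCornerRoot a f ∨ IsCornerRoot a g := by
  constructor
  · rintro ⟨e₁, -, e₂, -, hne, hv₁, hv₂⟩
    obtain ⟨d₁, d₂, hde₁, hd₁s, hd₂s, hd₁, hd₂⟩ := decompose_achieve a hf hg hv₁
    obtain ⟨c₁, c₂, hce₂, hc₁s, hc₂s, hc₁, hc₂⟩ := decompose_achieve a hf hg hv₂
    by_cases h : d₁ = c₁
    · right
      refine ⟨d₂, hd₂s, c₂, hc₂s, ?_, hd₂, hc₂⟩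
      intro hc
      apply hne
      rw [← hde₁, ← hce₂, h, hc]
    · left
      exact ⟨d₁, hd₁s, c₁, hc₁s, h, hd₁, hc₁⟩
  · rintro (⟨d₁, -, d₂, -, hne, hv₁, hv₂⟩ | ⟨d₁, -, d₂, -, hne, hv₁, hv₂⟩)
    · obtain ⟨e, -, he⟩ := exists_achieve a hg
      obtain ⟨hs₁, hm₁⟩ := achieve_mul a hf hg hv₁ he
      obtain ⟨hs₂, hm₂⟩ := achieve_mul a hf hg hv₂ he
      exact ⟨d₁ + e, hs₁, d₂ + e, hs₂, fun hc => hne (by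
        have := add_right_cancel hc; exact this), hm₁, hm₂⟩
    · obtain ⟨e, -, he⟩ := exists_achieve a hf
      obtain ⟨hs₁, hm₁⟩ := achieve_mul a hf hg he hv₁
      obtain ⟨hs₂, hm₂⟩ := achieve_mul a hf hg he hv₂
      exact ⟨e + d₁, hs₁, e + d₂, hs₂, fun hc => hne (by
        have := add_left_cancel hc; exact this), hm₁, hm₂⟩

end MvalLemmas

/-- For nonzero `f` and `k ≥ 1`, `a` is a corner root of `f` iff it is a corner root
of `f ^ k`. -/
theorem stmt6 {n : ℕ} (a : Fin n → ℝ) (f : MvPolynomial (Fin n) 𝕋) (hf0 : f ≠ 0)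
    (k : ℕ) (hk : 1 ≤ k) : IsCornerRoot a f ↔ IsCornerRoot a (f ^ k) := by
  induction k, hk using Nat.le_induction with
  | base => rw [pow_one]
  | succ k hk ih =>
    rw [pow_succ, corner_mul a (pow_ne_zero k hf0) hf0, ← ih, or_self]
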